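/- Let H be a finite connected graph with excess Exc(H) = |E(H)| − |V(H)| = k, where k ≥ −1, and let T be any spanning tree of H. Then diam(T) ≤ 2(k + 2) diam(H) + k + 1. -/

import Mathlib

noncomputable def gdiam {V : Type*} [Fintype V] (G : SimpleGraph V) : ℕ :=
  Finset.univ.sup fun p : V × V => G.dist p.1 p.2

/-! Let `K = k + 1` be the number of edges of `H` outside `T` and `D = diam H`, and suppose a path
of `T` has length at least `(K + 1)(D + 1)`. Cut it into `K + 1` consecutive segments of length
`D + 1` and join the ends of each segment by a geodesic of `H`. Over `ZMod 2`, the edge-count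
vectors of these `K + 1` geodesics restricted to the `K` non-tree edges are linearly dependent, so
for some nonempty set `I` of indices the geodesics in `I` together use every non-tree edge an even
number of times. A walk crosses each fundamental cut of `T` with the parity of its ends, so the
mod-2 edge counts of the geodesics in `I` and of the segments in `I` also agree on tree edges,
hence everywhere. The segments are edge-disjoint, so this support has `|I|(D + 1)` edges, whereas
the geodesics in `I` have at most `|I| D` edges in total. Hence `diam T < (k + 2)(D + 1)`. -/

open Finset

theorem List.Nodup.disjoint_take_drop_mul {α : Type*} {l : List α} (hl : l.Nodup) {m i j : ℕ}
    (hij : i ≠ j) : List.Disjoint ((l.drop (i * m)).take m) ((l.drop (j * m)).take m) := by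
  wlog h : i < j generalizing i j
  · exact (this hij.symm (by omega)).symm
  have hle : i * m + m ≤ j * m := by nlinarith
  rw [List.take_drop]
  exact List.disjoint_of_subset_right (List.take_subset _ _) <|
    List.disjoint_of_subset_left (List.drop_subset _ _) <|
    List.disjoint_take_drop hl (by omega)

theorem ZMod.exists_nonempty_sum_eq_zero_of_finrank_lt {M ι : Type*} [AddCommGroup M]
    [Module (ZMod 2) M] [Module.Finite (ZMod 2) M] [Fintype ι] (v : ι → M)
    (h : Module.finrank (ZMod 2) M < Fintype.card ι) :
    ∃ I : Finset ι, I.Nonempty ∧ ∑ i ∈ I, v i = 0 := by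
  classical
  obtain ⟨g, hg, i₀, hi₀⟩ := (Fintype.not_linearIndependent_iff (v := v)).mp
    fun hv => h.not_ge hv.fintype_card_le_finrank
  refine ⟨({i | g i ≠ 0} : Finset ι), ⟨i₀, by simpa using hi₀⟩, ?_⟩
  rw [← hg, sum_filter]
  refine sum_congr rfl fun i _ => ?_
  rcases (by decide : ∀ x : ZMod 2, x = 0 ∨ x = 1) (g i) with hi | hi <;> simp [hi]

namespace SimpleGraph

variable {V : Type*}

def cutIndicator (χ : V → ZMod 2) : Sym2 V → ZMod 2 :=
  Sym2.lift ⟨fun x y => χ x + χ y, fun _ _ => add_comm _ _⟩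

@[simp]
lemma cutIndicator_mk (χ : V → ZMod 2) (x y : V) : cutIndicator χ s(x, y) = χ x + χ y := rfl

lemma Walk.sum_map_cutIndicator {G : SimpleGraph V} (χ : V → ZMod 2) {u v : V}
    (w : G.Walk u v) : (w.edges.map (cutIndicator χ)).sum = χ u + χ v := by
  induction w with
  | nil => simp [CharTwo.add_self_eq_zero]
  | cons _ _ ih =>
    simp only [edges_cons, List.map_cons, List.sum_cons, ih, cutIndicator_mk]
    grind

lemma IsAcyclic.exists_cutIndicator_eq {T : SimpleGraph V} (hT : T.IsAcyclic) {f : Sym2 V}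
    (hf : f ∈ T.edgeSet) :
    ∃ χ : V → ZMod 2, cutIndicator χ f = 1 ∧ ∀ e ∈ T.edgeSet, e ≠ f → cutIndicator χ e = 0 := by
  classical
  induction f using Sym2.ind with | _ x y =>
  have hxy := isBridge_iff.mp (isAcyclic_iff_forall_isBridge.mp hT hf)
  set T' := T.deleteEdges {s(x, y)}
  refine ⟨fun z => if T'.Reachable x z then 1 else 0, by simp [hxy], fun e he he' => ?_⟩
  induction e using Sym2.ind with | _ z w =>
  have hzw : T'.Adj z w := by simp_all [T', deleteEdges_adj]
  have : T'.Reachable x z ↔ T'.Reachable x w :=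
    ⟨fun h => h.trans hzw.reachable, fun h => h.trans hzw.symm.reachable⟩
  simp only [cutIndicator_mk, this]
  exact CharTwo.add_self_eq_zero _

lemma IsAcyclic.eq_zero_of_forall_sum_mul_cutIndicator_eq_zero [Fintype V] {T : SimpleGraph V}
    (hT : T.IsAcyclic) {u : Sym2 V → ZMod 2} (hu : ∀ e ∉ T.edgeSet, u e = 0)
    (hcut : ∀ χ, ∑ e, u e * cutIndicator χ e = 0) : u = 0 := by
  funext f
  by_cases hf : f ∈ T.edgeSet
  · obtain ⟨χ, hχf, hχ⟩ := hT.exists_cutIndicator_eq hf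
    rw [Pi.zero_apply, ← hcut χ, sum_eq_single f, hχf, mul_one]
    · intro e _ hef
      by_cases he : e ∈ T.edgeSet
      · rw [hχ e he hef, mul_zero]
      · rw [hu e he, zero_mul]
    · simp
  · exact hu f hf

section Parity

variable [DecidableEq V]

def Walk.edgeParity {G : SimpleGraph V} {u v : V} (w : G.Walk u v) (e : Sym2 V) : ZMod 2 :=
  w.edges.count e

lemma Walk.edgeParity_eq_zero {G : SimpleGraph V} {u v : V} (w : G.Walk u v) {e : Sym2 V}
    (he : e ∉ w.edges) : w.edgeParity e = 0 := by
  simp [edgeParity, List.count_eq_zero.mpr he]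

variable [Fintype V]

lemma Walk.sum_edgeParity_mul_cutIndicator {G : SimpleGraph V} {u v : V} (w : G.Walk u v)
    (χ : V → ZMod 2) : ∑ e, w.edgeParity e * cutIndicator χ e = χ u + χ v := by
  rw [← w.sum_map_cutIndicator χ, sum_list_map_count]
  refine (sum_subset (subset_univ _) fun e _ he => ?_).symm.trans
    (sum_congr rfl fun e _ => (nsmul_eq_mul _ _).symm)
  rw [w.edgeParity_eq_zero (by simpa using he), zero_mul]

lemma sum_sum_edgeParity_mul_cutIndicator {ι : Type*} {G : SimpleGraph V} (I : Finset ι)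
    {a b : ι → V} (w : ∀ i, G.Walk (a i) (b i)) (χ : V → ZMod 2) :
    ∑ e, (∑ i ∈ I, (w i).edgeParity e) * cutIndicator χ e = ∑ i ∈ I, (χ (a i) + χ (b i)) := by
  simp_rw [sum_mul]
  rw [sum_comm]
  simp_rw [Walk.sum_edgeParity_mul_cutIndicator]

lemma IsAcyclic.sum_edgeParity_eq_of_forall_not_mem_edgeSet {ι : Type*} {G G' T : SimpleGraph V}
    (hT : T.IsAcyclic) {I : Finset ι} {a b : ι → V} (w : ∀ i, G.Walk (a i) (b i))
    (w' : ∀ i, G'.Walk (a i) (b i))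
    (h : ∀ e ∉ T.edgeSet, ∑ i ∈ I, (w i).edgeParity e = ∑ i ∈ I, (w' i).edgeParity e)
    (e : Sym2 V) : ∑ i ∈ I, (w i).edgeParity e = ∑ i ∈ I, (w' i).edgeParity e := by
  rw [← sub_eq_zero]
  refine congrFun (hT.eq_zero_of_forall_sum_mul_cutIndicator_eq_zero
    (u := fun e => ∑ i ∈ I, (w i).edgeParity e - ∑ i ∈ I, (w' i).edgeParity e)
    (fun e he => sub_eq_zero.mpr (h e he)) fun χ => ?_) e
  simp_rw [sub_mul, sum_sub_distrib, sum_sum_edgeParity_mul_cutIndicator, sub_self]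

lemma Walk.card_filter_sum_edgeParity_ne_zero_le {ι : Type*} {G : SimpleGraph V} (I : Finset ι)
    {a b : ι → V} (w : ∀ i, G.Walk (a i) (b i)) :
    #{e | ∑ i ∈ I, (w i).edgeParity e ≠ 0} ≤ ∑ i ∈ I, (w i).length := by
  calc #{e | ∑ i ∈ I, (w i).edgeParity e ≠ 0}
      ≤ #(I.biUnion fun i => (w i).edges.toFinset) := by
        refine card_le_card fun e he => ?_
        contrapose! he
        simp only [mem_biUnion, List.mem_toFinset, not_exists, not_and] at he
        simpa using sum_eq_zero fun i hi => (w i).edgeParity_eq_zero (he i hi)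
    _ ≤ ∑ i ∈ I, #(w i).edges.toFinset := card_biUnion_le
    _ ≤ ∑ i ∈ I, (w i).length := sum_le_sum fun i _ =>
        (List.toFinset_card_le _).trans (w i).length_edges.le

lemma Walk.IsPath.card_mul_le_card_filter_sum_edgeParity_take_drop {G : SimpleGraph V} {a b : V}
    {P : G.Walk a b} (hP : P.IsPath) {n m : ℕ} (h : n * m ≤ P.length) (I : Finset (Fin n)) :
    #I * m ≤ #{e | ∑ i ∈ I, ((P.drop (i * m)).take m).edgeParity e ≠ 0} := by
  set chunk : Fin n → List (Sym2 V) := fun i => (P.edges.drop (i * m)).take m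
  have hchunk (i : Fin n) : ((P.drop (i * m)).take m).edges = chunk i := by
    rw [Walk.edges_take, Walk.edges_drop]
  have hdisj {i j : Fin n} (hij : i ≠ j) : List.Disjoint (chunk i) (chunk j) :=
    hP.edges_nodup.disjoint_take_drop_mul (Fin.val_ne_of_ne hij)
  have hnodup (i : Fin n) : (chunk i).Nodup :=
    ((List.take_sublist _ _).trans (List.drop_sublist _ _)).nodup hP.edges_nodup
  calc #I * m = ∑ i ∈ I, #(chunk i).toFinset := by
        rw [card_eq_sum_ones, sum_mul]
        refine sum_congr rfl fun i _ => ?_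
        rw [List.toFinset_card_of_nodup, List.length_take, List.length_drop, P.length_edges]
        · have : (i + 1 : ℕ) * m ≤ n * m := Nat.mul_le_mul_right _ i.isLt
          rw [one_mul, min_eq_left (by rw [add_one_mul] at this; omega)]
        · exact hnodup i
    _ = #(I.biUnion fun i => (chunk i).toFinset) := by
        refine (card_biUnion fun i _ j _ hij => ?_).symm
        simpa [Function.onFun, List.disjoint_toFinset_iff_disjoint] using hdisj hij
    _ ≤ _ := by
        refine card_le_card fun e he => ?_
        obtain ⟨j, hj, hej⟩ := mem_biUnion.mp he
        rw [List.mem_toFinset] at hej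
        rw [mem_filter, sum_eq_single j]
        · simp [Walk.edgeParity, hchunk, List.count_eq_one_of_mem (hnodup j) hej]
        · exact fun i _ hij => Walk.edgeParity_eq_zero _ (hchunk i ▸ (hdisj hij.symm hej))
        · exact fun hj' => absurd hj hj'

theorem IsAcyclic.length_lt_of_isPath {T H : SimpleGraph V} [DecidableRel T.Adj]
    [DecidableRel H.Adj] (hT : T.IsAcyclic) {D : ℕ} (hD : ∀ x y, ∃ w : H.Walk x y, w.length ≤ D)
    {a b : V} {P : T.Walk a b} (hP : P.IsPath) :
    P.length < (#(H.edgeFinset \ T.edgeFinset) + 1) * (D + 1) := by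
  set F := H.edgeFinset \ T.edgeFinset
  by_contra! hlong
  choose γ hγ using fun i : Fin (#F + 1) =>
    hD (P.getVert (i * (D + 1))) ((P.drop (i * (D + 1))).getVert (D + 1))
  obtain ⟨I, hI, hγF⟩ := ZMod.exists_nonempty_sum_eq_zero_of_finrank_lt
    (fun i (e : F) => (γ i).edgeParity e) (by simp)
  have hγ_off_tree : ∀ e ∉ T.edgeSet, ∑ i ∈ I, (γ i).edgeParity e = 0 := by
    intro e he
    by_cases heH : e ∈ H.edgeSet
    · simpa [Finset.sum_apply] using congrFun hγF ⟨e, by simp [F, heH, he]⟩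
    · exact sum_eq_zero fun i _ => Walk.edgeParity_eq_zero _ fun h =>
        heH ((γ i).edges_subset_edgeSet h)
  have hγP := hT.sum_edgeParity_eq_of_forall_not_mem_edgeSet (I := I) γ
    (fun i => (P.drop (i * (D + 1))).take (D + 1)) fun e he => by
      rw [hγ_off_tree e he, sum_eq_zero fun i _ => Walk.edgeParity_eq_zero _ fun h =>
        he (Walk.edges_subset_edgeSet _ h)]
  have hupper := Walk.card_filter_sum_edgeParity_ne_zero_le I γ
  have hlower := hP.card_mul_le_card_filter_sum_edgeParity_take_drop hlong I
  simp_rw [hγP] at hupper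
  have hγ_total : ∑ i ∈ I, (γ i).length ≤ #I * D :=
    (sum_le_sum fun i _ => hγ i).trans_eq (by rw [sum_const, smul_eq_mul])
  have hI_pos := hI.card_pos
  nlinarith

end Parity

section Diameter

variable [Fintype V] {G : SimpleGraph V}

lemma Connected.exists_walk_length_le_gdiam (hG : G.Connected) (x y : V) :
    ∃ w : G.Walk x y, w.length ≤ gdiam G := by
  obtain ⟨w, hw⟩ := hG.exists_walk_length_eq_dist x y
  exact ⟨w, hw ▸ le_sup (f := fun p : V × V => G.dist p.1 p.2) (mem_univ (x, y))⟩

lemma Connected.exists_isPath_length_eq_gdiam (hG : G.Connected) :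
    ∃ (a b : V) (P : G.Walk a b), P.IsPath ∧ P.length = gdiam G := by
  have := hG.nonempty
  obtain ⟨⟨a, b⟩, -, hab⟩ := exists_mem_eq_sup univ univ_nonempty
    fun p : V × V => G.dist p.1 p.2
  obtain ⟨P, hP, hPlen⟩ := hG.exists_path_of_dist a b
  exact ⟨a, b, P, hP, hPlen.trans hab.symm⟩

lemma IsTree.card_sdiff_edgeFinset_add_card [DecidableEq V] {T : SimpleGraph V}
    [DecidableRel T.Adj] [DecidableRel G.Adj] (hT : T.IsTree) (hTG : T ≤ G) :
    #(G.edgeFinset \ T.edgeFinset) + Fintype.card V = #G.edgeFinset + 1 := by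
  have hsub := edgeFinset_mono hTG
  rw [card_sdiff_of_subset hsub, ← hT.card_edgeFinset]
  have := card_le_card hsub
  omega

end Diameter

end SimpleGraph

open SimpleGraph

theorem spanning_tree_diam_excess_general {V : Type*} [Fintype V] (H : SimpleGraph V)
    (hH : H.Connected) (k : ℤ)
    (hexc : (Nat.card H.edgeSet : ℤ) - (Fintype.card V : ℤ) = k)
    (T : SimpleGraph V) (hT : T.IsTree) (hTH : T ≤ H) :
    (gdiam T : ℤ) ≤ 2 * (k + 2) * (gdiam H : ℤ) + k + 1 := by
  classical
  obtain ⟨a, b, P, hP, hPlen⟩ := hT.connected.exists_isPath_length_eq_gdiam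
  have hK : (#(H.edgeFinset \ T.edgeFinset) : ℤ) = k + 1 := by
    have := hT.card_sdiff_edgeFinset_add_card hTH
    rw [Nat.card_eq_fintype_card, ← edgeFinset_card] at hexc
    omega
  have hlt : (gdiam T : ℤ) < (k + 2) * (gdiam H + 1) := by
    have := hT.isAcyclic.length_lt_of_isPath hH.exists_walk_length_le_gdiam hP
    rw [hPlen] at this
    rw [show k + 2 = #(H.edgeFinset \ T.edgeFinset) + 1 by omega]
    exact_mod_cast this
  nlinarith

/-- Let `H` be a finite connected graph with excess
`Exc(H) = |E(H)| − |V(H)| = k`, `k ≥ −1`, and let `T` be any spanning tree of `H`.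
Then `diam(T) ≤ 2 (k + 2) diam(H) + k + 1`. -/
theorem spanning_tree_diam_excess {V : Type*} [Fintype V] (H : SimpleGraph V)
    (hH : H.Connected) (k : ℤ) (hk : -1 ≤ k)
    (hexc : (Nat.card H.edgeSet : ℤ) - (Fintype.card V : ℤ) = k)
    (T : SimpleGraph V) (hT : T.IsTree) (hTH : T ≤ H) :
    (gdiam T : ℤ) ≤ 2 * (k + 2) * (gdiam H : ℤ) + k + 1 :=
  spanning_tree_diam_excess_general H hH k hexc T hT hTH
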